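/- arXiv:2506.01399 — 4 statements merged into one kernel-verified Lean document; each statement's English description precedes it below -/
import Mathlib

section
/- Let v ≥ 0, V > 0, ω > 0, β > 0 and let (x, y) ∈ ℝ² satisfy x² + y² = β². Then min over u_hf ∈ [−1, 1] of the max over u_lf ∈ [−π, π] of x·(−y ω u_hf + v sin u_lf) + y·(x ω u_hf + v cos u_lf − V) equals v β − y V. Consequently, the minimax is ≤ 0 if and only if y ≥ β v / V; i.e., the nonusable part of the boundary of the captivity set { (x,y) : x² + y² ≤ β² } is exactly { (x, y) : x² + y² = β², y ≥ β v / V }. -/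
/-- On the boundary of the captivity set `{ (x,y) : x² + y² ≤ β² }`, the minimax of
the radial derivative of `x² + y²` — the min over `u_hf ∈ [−1,1]` of the max over
`u_lf ∈ [−π,π]` of `(x,y) ⬝ f(x,y,u_lf,u_hf)` — equals `v β − y V`; consequently it is
`≤ 0` exactly on the nonusable part `{ (x,y) : x² + y² = β², y ≥ β v / V }`. -/
theorem stmt_8 (v V ω β x y : ℝ) (hv : 0 ≤ v) (hV : 0 < V) (hω : 0 < ω) (hβ : 0 < β)
    (hxy : x ^ 2 + y ^ 2 = β ^ 2) :
    IsLeast { m : ℝ | ∃ uhf ∈ Set.Icc (-1 : ℝ) 1,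
        IsGreatest ((fun ulf => x * (-(y * ω * uhf) + v * Real.sin ulf)
          + y * (x * ω * uhf + v * Real.cos ulf - V)) '' Set.Icc (-Real.pi) Real.pi) m }
      (v * β - y * V)
    ∧ (v * β - y * V ≤ 0 ↔ β * v / V ≤ y) := by
  have hy1 : y / β ∈ Set.Icc (-1 : ℝ) 1 := by
    constructor
    · rw [le_div_iff₀ hβ]; nlinarith [sq_nonneg x]
    · rw [div_le_one hβ]; nlinarith [sq_nonneg x]
  -- a witness angle t ∈ [-π, π] with x sin t + y cos t = β
  obtain ⟨t, ht, htval⟩ : ∃ t ∈ Set.Icc (-Real.pi) Real.pi,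
      x * Real.sin t + y * Real.cos t = β := by
    rcases le_or_gt 0 x with hx | hx
    · refine ⟨Real.arccos (y / β), ?_, ?_⟩
      · exact ⟨le_trans (neg_nonpos.mpr Real.pi_pos.le) (Real.arccos_nonneg _),
          Real.arccos_le_pi _⟩
      · have hcos : Real.cos (Real.arccos (y / β)) = y / β :=
          Real.cos_arccos hy1.1 hy1.2
        have hsin : Real.sin (Real.arccos (y / β)) = Real.sqrt (1 - (y / β) ^ 2) :=
          Real.sin_arccos _
        have h1 : (1 : ℝ) - (y / β) ^ 2 = (x / β) ^ 2 := by
          field_simp; nlinarith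
        have : Real.sqrt (1 - (y / β) ^ 2) = x / β := by
          rw [h1, Real.sqrt_sq (by positivity)]
        rw [hcos, hsin, this]
        field_simp
        nlinarith
    · refine ⟨-Real.arccos (y / β), ?_, ?_⟩
      · exact ⟨neg_le_neg (Real.arccos_le_pi _),
          le_trans (neg_nonpos.mpr (Real.arccos_nonneg _)) Real.pi_pos.le⟩
      · have hcos : Real.cos (Real.arccos (y / β)) = y / β :=
          Real.cos_arccos hy1.1 hy1.2
        have hsin : Real.sin (Real.arccos (y / β)) = Real.sqrt (1 - (y / β) ^ 2) :=
          Real.sin_arccos _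
        have h1 : (1 : ℝ) - (y / β) ^ 2 = (-x / β) ^ 2 := by
          field_simp; nlinarith
        have hs : Real.sqrt (1 - (y / β) ^ 2) = -x / β := by
          rw [h1, Real.sqrt_sq (div_nonneg (by linarith) hβ.le)]
        rw [Real.sin_neg, Real.cos_neg, hcos, hsin, hs]
        field_simp
        nlinarith
  have key : ∀ u : ℝ, IsGreatest ((fun ulf => x * (-(y * ω * u) + v * Real.sin ulf)
      + y * (x * ω * u + v * Real.cos ulf - V)) '' Set.Icc (-Real.pi) Real.pi)
      (v * β - y * V) := by
    intro u
    constructor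
    · exact ⟨t, ht, by dsimp only; nlinarith [htval]⟩
    · rintro m ⟨s, _, rfl⟩
      have h1 : x * Real.sin s + y * Real.cos s ≤ β := by
        nlinarith [sq_nonneg (x * Real.cos s - y * Real.sin s),
          Real.sin_sq_add_cos_sq s, sq_nonneg (x * Real.sin s + y * Real.cos s - β)]
      have h2 : (fun ulf => x * (-(y * ω * u) + v * Real.sin ulf)
          + y * (x * ω * u + v * Real.cos ulf - V)) s
          = v * (x * Real.sin s + y * Real.cos s) - y * V := by
        show x * (-(y * ω * u) + v * Real.sin s)
          + y * (x * ω * u + v * Real.cos s - V)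
          = v * (x * Real.sin s + y * Real.cos s) - y * V
        ring
      rw [h2]
      nlinarith [mul_le_mul_of_nonneg_left h1 hv]
  refine ⟨⟨⟨0, by norm_num, key 0⟩, ?_⟩, ?_⟩
  · rintro m ⟨u, _, hm⟩
    exact (hm.unique (key u)).ge
  · rw [div_le_iff₀ hV, sub_nonpos]
    constructor <;> intro h <;> nlinarith
end

section
/- Let 0 ≤ v < V, ω > 0, β > 0 and let (x, y) ∈ ℝ² satisfy x² + y² = β². Then min over u_hf ∈ [−1, 1] of the max over u_lf ∈ [−π, π] of x·(−y ω u_hf + v sin u_lf) + y·(x ω u_hf + v cos u_lf − V) equals 0 if and only if y = β v / V and x = β √(1 − (v/V)²) or x = −β √(1 − (v/V)²). That is, the boundary of the nonusable part consists of exactly these two points, symmetric about the y-axis. -/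
/-!
Only the term `v (x sin u_lf + y cos u_lf) - y V` of the payoff survives: the two `u_hf`-terms
cancel, since the yaw rate moves the relative position tangentially to the circle. On the circle
of radius `β` the sinusoid `x sin t + y cos t` has maximum `√(x² + y²) = β`, so the minimax value
is `v β - y V` whatever `u_hf` is, and it vanishes exactly when `y = β v / V`.
-/

open Real Set

theorem isGreatest_image_mul_sin_add_mul_cos (a b : ℝ) :
    IsGreatest ((fun t => a * sin t + b * cos t) '' Icc (-π) π) √(a ^ 2 + b ^ 2) := by
  set z : ℂ := ⟨b, a⟩
  have hz : ‖z‖ = √(a ^ 2 + b ^ 2) := by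
    rw [Complex.norm_def, Complex.normSq_mk]
    ring_nf
  refine ⟨⟨z.arg, Ioc_subset_Icc_self (Complex.arg_mem_Ioc z), ?_⟩, ?_⟩
  · have ha : ‖z‖ * sin z.arg = a := Complex.norm_mul_sin_arg z
    have hb : ‖z‖ * cos z.arg = b := Complex.norm_mul_cos_arg z
    rw [← hz]
    linear_combination -sin z.arg * ha - cos z.arg * hb + ‖z‖ * sin_sq_add_cos_sq z.arg
  · rintro _ ⟨t, -, rfl⟩
    refine (le_abs_self _).trans (abs_le_sqrt ?_)
    nlinarith [sq_nonneg (a * cos t - b * sin t), sin_sq_add_cos_sq t]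

theorem eq_mul_sqrt_or_eq_neg_mul_sqrt_of_sq_eq {x β r : ℝ} (h : x ^ 2 = β ^ 2 * r) :
    x = β * √r ∨ x = -(β * √r) := by
  rcases le_or_gt 0 r with hr | hr
  · exact sq_eq_sq_iff_eq_or_eq_neg.mp (by rw [h, mul_pow, sq_sqrt hr])
  · have hβr : β ^ 2 * r = 0 := by nlinarith [sq_nonneg x, sq_nonneg β]
    have hβ : β = 0 := pow_eq_zero_iff two_ne_zero |>.mp
      ((mul_eq_zero.mp hβr).resolve_right hr.ne)
    left
    simpa [hβ] using h

theorem setOf_exists_isGreatest_eq_singleton {ι α : Type*} [PartialOrder α] {A : Set ι}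
    {S : ι → Set α} {c : α} (hA : A.Nonempty) (hS : ∀ u, IsGreatest (S u) c) :
    {m | ∃ u ∈ A, IsGreatest (S u) m} = {c} := by
  ext m
  obtain ⟨u₀, hu₀⟩ := hA
  exact ⟨fun ⟨u, _, hm⟩ => hm.unique (hS u), fun hm => ⟨u₀, hu₀, hm ▸ hS u₀⟩⟩

theorem isGreatest_image_payoff (v V ω β x y u : ℝ) (hv : 0 ≤ v) (hβ : 0 ≤ β)
    (hxy : x ^ 2 + y ^ 2 = β ^ 2) :
    IsGreatest ((fun ulf => x * (-(y * ω * u) + v * sin ulf)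
      + y * (x * ω * u + v * cos ulf - V)) '' Icc (-π) π) (v * β - y * V) := by
  have hmono : Monotone fun s : ℝ => v * s - y * V := fun _ _ hst =>
    sub_le_sub_right (mul_le_mul_of_nonneg_left hst hv) _
  have hpayoff : (fun ulf => x * (-(y * ω * u) + v * sin ulf) + y * (x * ω * u + v * cos ulf - V))
      = (fun s => v * s - y * V) ∘ fun t => x * sin t + y * cos t := by
    funext ulf
    simp only [Function.comp_apply]
    ring
  rw [hpayoff, image_comp, ← sqrt_sq hβ, ← hxy]
  exact hmono.map_isGreatest (isGreatest_image_mul_sin_add_mul_cos x y)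

theorem stmt_9_general (v V ω β x y : ℝ) (hv : 0 ≤ v) (hV : 0 < V)
    (hβ : 0 < β) (hxy : x ^ 2 + y ^ 2 = β ^ 2) :
    IsLeast { m : ℝ | ∃ uhf ∈ Set.Icc (-1 : ℝ) 1,
        IsGreatest ((fun ulf => x * (-(y * ω * uhf) + v * Real.sin ulf)
          + y * (x * ω * uhf + v * Real.cos ulf - V)) '' Set.Icc (-Real.pi) Real.pi) m }
      (0 : ℝ)
    ↔ (y = β * v / V ∧
        (x = β * Real.sqrt (1 - (v / V) ^ 2) ∨ x = -(β * Real.sqrt (1 - (v / V) ^ 2)))) := by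
  rw [setOf_exists_isGreatest_eq_singleton (nonempty_Icc.mpr (by norm_num))
    fun u => isGreatest_image_payoff v V ω β x y u hv hβ.le hxy]
  have hyV : 0 = v * β - y * V ↔ y = β * v / V := by
    rw [eq_div_iff hV.ne']
    constructor <;> intro h <;> linarith
  rw [show IsLeast {v * β - y * V} 0 ↔ 0 = v * β - y * V from
    ⟨fun h => h.1, fun h => h ▸ isLeast_singleton⟩, hyV]
  refine ⟨fun hy => ⟨hy, eq_mul_sqrt_or_eq_neg_mul_sqrt_of_sq_eq ?_⟩, And.left⟩
  rw [hy] at hxy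
  field_simp at hxy ⊢
  linear_combination hxy

/-- The boundary of the nonusable part: for `0 ≤ v < V`, the minimax
`min_{u_hf ∈ [−1,1]} max_{u_lf ∈ [−π,π]} (x,y) ⬝ f(x,y,u_lf,u_hf)` on the circle
`x² + y² = β²` equals `0` exactly at the two points with `y = β v / V` and
`x = ± β √(1 − (v/V)²)`, symmetric about the y-axis. -/
theorem stmt_9 (v V ω β x y : ℝ) (hv : 0 ≤ v) (hvV : v < V) (hV : 0 < V)
    (hω : 0 < ω) (hβ : 0 < β) (hxy : x ^ 2 + y ^ 2 = β ^ 2) :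
    IsLeast { m : ℝ | ∃ uhf ∈ Set.Icc (-1 : ℝ) 1,
        IsGreatest ((fun ulf => x * (-(y * ω * uhf) + v * Real.sin ulf)
          + y * (x * ω * uhf + v * Real.cos ulf - V)) '' Set.Icc (-Real.pi) Real.pi) m }
      (0 : ℝ)
    ↔ (y = β * v / V ∧
        (x = β * Real.sqrt (1 - (v / V) ^ 2) ∨ x = -(β * Real.sqrt (1 - (v / V) ^ 2)))) :=
  stmt_9_general v V ω β x y hv hV hβ hxy
end

section
/- Let v ≥ 0, V > 0, ω > 0, β > 0 and let (x, y) ∈ ℝ² satisfy x² + y² = β² and y > β v / V. Then for every u_lf ∈ [−π, π] and every u_hf ∈ [−1, 1], x·(−y ω u_hf + v sin u_lf) + y·(x ω u_hf + v cos u_lf − V) < 0. That is, at every point of the interior of the nonusable part, the radial derivative of the squared distance to the origin is strictly negative for all admissible inputs of both players. -/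
/-- In the interior of the nonusable part (`x² + y² = β²`, `y > β v / V`), the radial
derivative of the squared distance to the origin along the homicidal-chauffeur relative
dynamics is strictly negative for all admissible inputs of both players. -/
theorem stmt_10 (v V ω β x y : ℝ) (hv : 0 ≤ v) (hV : 0 < V) (hω : 0 < ω) (hβ : 0 < β)
    (hxy : x ^ 2 + y ^ 2 = β ^ 2) (hy : β * v / V < y) :
    ∀ ulf ∈ Set.Icc (-Real.pi) Real.pi, ∀ uhf ∈ Set.Icc (-1 : ℝ) 1,
      x * (-(y * ω * uhf) + v * Real.sin ulf)
        + y * (x * ω * uhf + v * Real.cos ulf - V) < 0 := by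
  intro ulf _ uhf _
  have hsc := Real.sin_sq_add_cos_sq ulf
  have hcs : x * Real.sin ulf + y * Real.cos ulf ≤ β := by
    nlinarith [sq_nonneg (x * Real.cos ulf - y * Real.sin ulf),
      sq_nonneg (x * Real.sin ulf + y * Real.cos ulf - β)]
  have hyV : β * v < y * V := by
    have := (div_lt_iff₀ hV).mp hy
    linarith
  nlinarith [mul_le_mul_of_nonneg_left hcs hv]
end

section
/- Let v ≥ 0, V > 0, ω > 0. Suppose x_lf, y_lf, x_hf, y_hf, θ : ℝ → ℝ are differentiable functions and u_lf, u_hf : ℝ → ℝ are functions satisfying, for all t: ẋ_lf = v sin u_lf, ẏ_lf = v cos u_lf, ẋ_hf = V sin θ, ẏ_hf = V cos θ, θ̇ = ω u_hf. Define the relative state x(t) := cos θ(t)·(x_lf(t) − x_hf(t)) − sin θ(t)·(y_lf(t) − y_hf(t)) and y(t) := sin θ(t)·(x_lf(t) − x_hf(t)) + cos θ(t)·(y_lf(t) − y_hf(t)). Then for all t: ẋ(t) = −y(t) ω u_hf(t) + v sin(u_lf(t) − θ(t)) and ẏ(t) = x(t) ω u_hf(t) + v cos(u_lf(t) − θ(t))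 − V. -/
/-!
Writing `R(θ)` for the rotation by `θ`, the relative state is `R(θ) p` with `p` the difference of
the two positions, so `d/dt (R(θ) p) = θ' J R(θ) p + R(θ) p'` with `J` the quarter turn. The first
term is the `ω u_hf` part; in the second, rotating the velocity difference by the tracker's heading
turns the pedestrian's velocity into `v (sin (u_lf − θ), cos (u_lf − θ))` and the chauffeur's into
`(0, V)`.
-/

open Real

section RotatingFrame

variable {f g θ : ℝ → ℝ} {f' g' θ' t : ℝ}

theorem hasDerivAt_rotate_fst (hf : HasDerivAt f f' t) (hg : HasDerivAt g g' t)
    (hθ : HasDerivAt θ θ' t) :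
    HasDerivAt (fun s => cos (θ s) * f s - sin (θ s) * g s)
      (-(sin (θ t) * f t + cos (θ t) * g t) * θ' + (cos (θ t) * f' - sin (θ t) * g')) t := by
  refine ((hθ.cos.mul hf).sub (hθ.sin.mul hg)).congr_deriv ?_
  ring

theorem hasDerivAt_rotate_snd (hf : HasDerivAt f f' t) (hg : HasDerivAt g g' t)
    (hθ : HasDerivAt θ θ' t) :
    HasDerivAt (fun s => sin (θ s) * f s + cos (θ s) * g s)
      ((cos (θ t) * f t - sin (θ t) * g t) * θ' + (sin (θ t) * f' + cos (θ t) * g')) t := by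
  refine ((hθ.sin.mul hf).add (hθ.cos.mul hg)).congr_deriv ?_
  ring

end RotatingFrame

theorem rotate_relative_velocity_fst (v V u θ : ℝ) :
    cos θ * (v * sin u - V * sin θ) - sin θ * (v * cos u - V * cos θ) = v * sin (u - θ) := by
  rw [sin_sub]
  ring

theorem rotate_relative_velocity_snd (v V u θ : ℝ) :
    sin θ * (v * sin u - V * sin θ) + cos θ * (v * cos u - V * cos θ) = v * cos (u - θ) - V := by
  linear_combination v * (cos_sub u θ).symm - V * sin_sq_add_cos_sq θ

theorem stmt_13_general (v V ω : ℝ)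
    (xlf ylf xhf yhf θ : ℝ → ℝ) (ulf uhf : ℝ → ℝ)
    (hxlf : ∀ t, HasDerivAt xlf (v * Real.sin (ulf t)) t)
    (hylf : ∀ t, HasDerivAt ylf (v * Real.cos (ulf t)) t)
    (hxhf : ∀ t, HasDerivAt xhf (V * Real.sin (θ t)) t)
    (hyhf : ∀ t, HasDerivAt yhf (V * Real.cos (θ t)) t)
    (hθ : ∀ t, HasDerivAt θ (ω * uhf t) t) :
    (∀ t, HasDerivAt
      (fun s => Real.cos (θ s) * (xlf s - xhf s) - Real.sin (θ s) * (ylf s - yhf s))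
      (-(Real.sin (θ t) * (xlf t - xhf t) + Real.cos (θ t) * (ylf t - yhf t)) * ω * uhf t
        + v * Real.sin (ulf t - θ t)) t)
    ∧ (∀ t, HasDerivAt
      (fun s => Real.sin (θ s) * (xlf s - xhf s) + Real.cos (θ s) * (ylf s - yhf s))
      ((Real.cos (θ t) * (xlf t - xhf t) - Real.sin (θ t) * (ylf t - yhf t)) * ω * uhf t
        + v * Real.cos (ulf t - θ t) - V) t) := by
  constructor <;> intro t
  · have h := hasDerivAt_rotate_fst ((hxlf t).sub (hxhf t)) ((hylf t).sub (hyhf t)) (hθ t)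
    rw [rotate_relative_velocity_fst, ← mul_assoc] at h
    exact h
  · have h := hasDerivAt_rotate_snd ((hxlf t).sub (hxhf t)) ((hylf t).sub (hyhf t)) (hθ t)
    rw [rotate_relative_velocity_snd, ← mul_assoc, ← add_sub_assoc] at h
    exact h

/-- Derivation of the relative dynamics (equation (13)) of the homicidal-chauffeur
system: in the frame rotated by the tracker's heading `θ`, the relative position
`(x, y)` satisfies `ẋ = −y ω u_hf + v sin(u_lf − θ)` and
`ẏ = x ω u_hf + v cos(u_lf − θ) − V`. -/
theorem stmt_13 (v V ω : ℝ) (hv : 0 ≤ v) (hV : 0 < V) (hω : 0 < ω)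
    (xlf ylf xhf yhf θ : ℝ → ℝ) (ulf uhf : ℝ → ℝ)
    (hxlf : ∀ t, HasDerivAt xlf (v * Real.sin (ulf t)) t)
    (hylf : ∀ t, HasDerivAt ylf (v * Real.cos (ulf t)) t)
    (hxhf : ∀ t, HasDerivAt xhf (V * Real.sin (θ t)) t)
    (hyhf : ∀ t, HasDerivAt yhf (V * Real.cos (θ t)) t)
    (hθ : ∀ t, HasDerivAt θ (ω * uhf t) t) :
    (∀ t, HasDerivAt
      (fun s => Real.cos (θ s) * (xlf s - xhf s) - Real.sin (θ s) * (ylf s - yhf s))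
      (-(Real.sin (θ t) * (xlf t - xhf t) + Real.cos (θ t) * (ylf t - yhf t)) * ω * uhf t
        + v * Real.sin (ulf t - θ t)) t)
    ∧ (∀ t, HasDerivAt
      (fun s => Real.sin (θ s) * (xlf s - xhf s) + Real.cos (θ s) * (ylf s - yhf s))
      ((Real.cos (θ t) * (xlf t - xhf t) - Real.sin (θ t) * (ylf t - yhf t)) * ω * uhf t
        + v * Real.cos (ulf t - θ t) - V) t) :=
  stmt_13_general v V ω xlf ylf xhf yhf θ ulf uhf hxlf hylf hxhf hyhf hθ
end
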